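/- arXiv:1502.03365 — 4 statements merged into one kernel-verified Lean document; each statement's English description precedes it below -/
import Mathlib

section
/- Fix a pair of vertices u < v and two type assignments σ, δ ∈ {±1}^n. Under the labeled Erdős–Rényi distribution ℙ'_n, define for a realization (G, L): W_{uv}(G, L, σ) = 2a·μ(ℓ)/(a·μ(ℓ) + b·ν(ℓ)) if σ_u = σ_v, (u,v) ∈ E(G) and L_{uv} = ℓ; W_{uv}(G, L, σ) = 2b·ν(ℓ)/(a·μ(ℓ) + b·ν(ℓ)) if σ_u ≠ σ_v, (u,v) ∈ E(G) and L_{uv} = ℓ; W_{uv}(G, L, σ) = (1 − a/n)/(1 − (a+b)/(2n)) if σ_u = σ_v and (u,v) ∉ E(G); and W_{uv}(G, L, σ) = (1 − b/n)/(1 − (a+b)/(2n)) if σ_u ≠ σ_v and (u,v) ∉ E(G). Then there exists a constant C depending only on a, b, μ, ν such that for all n: if σ_u·σ_v = δ_u·δ_v, then |E_{ℙ'_n}[W_{uv}(G,L,σ)·W_{uv}(G,L,δ)] − (1 + τ/n + (a−b)²/(4n²))| ≤ C/n³, and if σ_u·σ_v ≠ δ_u·δ_v, then |E_{ℙ'_n}[W_{uv}(G,L,σ)·W_{uv}(G,L,δ)]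 − (1 − τ/n − (a−b)²/(4n²))| ≤ C/n³. -/
open Finset Filter Real

namespace LSBM

/-- Ordered pairs `u < v` of vertices. -/
abbrev Pairs (n : ℕ) := {p : Fin n × Fin n // p.1 < p.2}

/-- A labeled-graph configuration: each pair `u < v` carries `none` (no edge)
or `some ℓ` (an edge with label `ℓ`). -/
abbrev EdgeConf (n : ℕ) (L : Type*) := Pairs n → Option L

variable {L : Type*}

/-- The label (if any) on the edge between `u` and `v`. -/
def getLabel {n : ℕ} (E : EdgeConf n L) (u v : Fin n) : Option L :=
  if h : u < v then E ⟨(u, v), h⟩ else if h' : v < u then E ⟨(v, u), h'⟩ else none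

/-- Per-pair mass under the labeled stochastic block model. -/
noncomputable def sbmPairMass (n : ℕ) (a b : ℝ) (μ ν : L → ℝ) (same : Bool) : Option L → ℝ
  | none => if same then 1 - a / n else 1 - b / n
  | some ℓ => if same then (a / n) * μ ℓ else (b / n) * ν ℓ

/-- Joint mass of a (type assignment, labeled graph) outcome under the labeled SBM. -/
noncomputable def sbmMass (n : ℕ) (a b : ℝ) (μ ν : L → ℝ)
    (x : (Fin n → Bool) × EdgeConf n L) : ℝ :=
  (1 / 2 : ℝ) ^ n *
    ∏ p : Pairs n, sbmPairMass n a b μ ν (x.1 p.1.1 == x.1 p.1.2) (x.2 p)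

/-- Probability of an event under the labeled SBM (joint in types and graph). -/
noncomputable def sbmProb [Fintype L] (n : ℕ) (a b : ℝ) (μ ν : L → ℝ)
    (A : Set ((Fin n → Bool) × EdgeConf n L)) : ℝ :=
  ∑ x : (Fin n → Bool) × EdgeConf n L, A.indicator (sbmMass n a b μ ν) x

/-- Probability of a labeled-graph event under the labeled SBM (marginal over types). -/
noncomputable def sbmGraphProb [Fintype L] (n : ℕ) (a b : ℝ) (μ ν : L → ℝ)
    (A : Set (EdgeConf n L)) : ℝ :=
  sbmProb n a b μ ν {x | x.2 ∈ A}

/-- Conditional (given the type assignment `σ`) probability of a labeled-graph event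
under the labeled SBM. -/
noncomputable def sbmCondProb [Fintype L] (n : ℕ) (a b : ℝ) (μ ν : L → ℝ)
    (σ : Fin n → Bool) (A : Set (EdgeConf n L)) : ℝ :=
  ∑ E : EdgeConf n L, A.indicator
    (fun E' => ∏ p : Pairs n, sbmPairMass n a b μ ν (σ p.1.1 == σ p.1.2) (E' p)) E

/-- Conditional (given `σ`) expectation of a function of the labeled graph. -/
noncomputable def sbmCondExp [Fintype L] (n : ℕ) (a b : ℝ) (μ ν : L → ℝ)
    (σ : Fin n → Bool) (f : EdgeConf n L → ℝ) : ℝ :=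
  ∑ E : EdgeConf n L,
    (∏ p : Pairs n, sbmPairMass n a b μ ν (σ p.1.1 == σ p.1.2) (E p)) * f E

/-- Per-pair mass under the labeled Erdős–Rényi model. -/
noncomputable def erPairMass (n : ℕ) (a b : ℝ) (μ ν : L → ℝ) : Option L → ℝ
  | none => 1 - (a + b) / (2 * n)
  | some ℓ => ((a + b) / (2 * n)) * ((a * μ ℓ + b * ν ℓ) / (a + b))

/-- Mass of a labeled graph under the labeled Erdős–Rényi model. -/
noncomputable def erMass [Fintype L] (n : ℕ) (a b : ℝ) (μ ν : L → ℝ) (E : EdgeConf n L) : ℝ :=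
  ∏ p : Pairs n, erPairMass n a b μ ν (E p)

/-- Probability of a labeled-graph event under the labeled Erdős–Rényi model. -/
noncomputable def erProb [Fintype L] (n : ℕ) (a b : ℝ) (μ ν : L → ℝ)
    (A : Set (EdgeConf n L)) : ℝ :=
  ∑ E : EdgeConf n L, A.indicator (erMass n a b μ ν) E

/-- Expectation of a function of the labeled graph under the labeled Erdős–Rényi model. -/
noncomputable def erExp [Fintype L] (n : ℕ) (a b : ℝ) (μ ν : L → ℝ)
    (f : EdgeConf n L → ℝ) : ℝ :=
  ∑ E : EdgeConf n L, erMass n a b μ ν E * f E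

/-- `μ` is a probability distribution on the (finite) label set. -/
def IsProbVec [Fintype L] (μ : L → ℝ) : Prop := (∀ ℓ, 0 ≤ μ ℓ) ∧ ∑ ℓ, μ ℓ = 1

/-- The reconstruction-threshold parameter `τ`. -/
noncomputable def tau [Fintype L] (a b : ℝ) (μ ν : L → ℝ) : ℝ :=
  ∑ ℓ, (a * μ ℓ - b * ν ℓ) ^ 2 / (2 * (a * μ ℓ + b * ν ℓ))

/-- The weighted adjacency matrix `W` with `W u v = A u v * w (L u v)`. -/
def Wmat {n : ℕ} (w : L → ℝ) (E : EdgeConf n L) : Matrix (Fin n) (Fin n) ℝ :=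
  fun u v => match getLabel E u v with
    | none => 0
    | some ℓ => w ℓ

/-- The ±1 vector associated with a Boolean type assignment (`true ↦ +1`). -/
def signVec {n : ℕ} (σ : Fin n → Bool) : Fin n → ℝ := fun u => if σ u then 1 else -1

/-- `x` is a vector with entries in `{±1}`. -/
def IsSignVec {n : ℕ} (x : Fin n → ℝ) : Prop := ∀ u, x u = 1 ∨ x u = -1

/-- Componentwise sign of a real vector. -/
noncomputable def signR {n : ℕ} (x : Fin n → ℝ) : Fin n → ℝ :=
  fun u => if 0 ≤ x u then 1 else -1

open Classical in
/-- Hamming distance between two vectors. -/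
noncomputable def hamming {n : ℕ} (x y : Fin n → ℝ) : ℕ :=
  (univ.filter fun u => x u ≠ y u).card

/-- The overlap `Q(x, y) = 1/2 - (1/n) min(d(x,y), d(x,-y))`. -/
noncomputable def overlap (n : ℕ) (x y : Fin n → ℝ) : ℝ :=
  1 / 2 - (1 / n) * min (hamming x y : ℝ) (hamming x (-y) : ℝ)

open Classical in
/-- The weight of the cut induced by a ±1 assignment `σ`:
`∑_{(u,v) : u < v, σ_u ≠ σ_v} W_{uv}`. -/
noncomputable def cutWeight {n : ℕ} (w : L → ℝ) (E : EdgeConf n L) (σ : Fin n → ℝ) : ℝ :=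
  ∑ p : Pairs n, if σ p.1.1 ≠ σ p.1.2 then Wmat w E p.1.1 p.1.2 else 0

/-- The quadratic form `xᵀ M x`. -/
def quadForm {n : ℕ} (M : Matrix (Fin n) (Fin n) ℝ) (x : Fin n → ℝ) : ℝ :=
  ∑ u, ∑ v, x u * M u v * x v

/-- The entrywise inner product `⟨A, B⟩ = ∑_{u,v} A u v * B u v`. -/
def mInner {n : ℕ} (A B : Matrix (Fin n) (Fin n) ℝ) : ℝ :=
  ∑ u, ∑ v, A u v * B u v

/-- The degree of a vertex. -/
def degree {n : ℕ} (E : EdgeConf n L) (u : Fin n) : ℕ :=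
  (univ.filter fun v => (getLabel E u v).isSome).card

open Classical in
/-- The weighted adjacency matrix of the graph obtained by removing all edges incident
to vertices of degree larger than `(3/2)·(a+b)/2`. -/
noncomputable def prunedW {n : ℕ} (a b : ℝ) (w : L → ℝ) (E : EdgeConf n L) :
    Matrix (Fin n) (Fin n) ℝ :=
  fun u v =>
    if (degree E u : ℝ) ≤ (3 / 2) * ((a + b) / 2) ∧
       (degree E v : ℝ) ≤ (3 / 2) * ((a + b) / 2)
    then Wmat w E u v else 0

/-- The conditional (given `σ`) entrywise expectation `E[W | σ]` of the weighted
adjacency matrix. -/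
noncomputable def condEW {n : ℕ} [Fintype L] (a b : ℝ) (μ ν w : L → ℝ)
    (σ : Fin n → Bool) : Matrix (Fin n) (Fin n) ℝ :=
  fun u v =>
    if u = v then 0
    else if σ u = σ v then (a / n) * ∑ ℓ, μ ℓ * w ℓ
    else (b / n) * ∑ ℓ, ν ℓ * w ℓ

/-- The matrix `D' = W' - (α/n) J` used in the spectral method, where
`α = (1/2)·∑_ℓ w(ℓ)(aμ(ℓ)+bν(ℓ))` and `J` is the all-one matrix. -/
noncomputable def Dmat {n : ℕ} [Fintype L] (a b : ℝ) (μ ν w : L → ℝ)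
    (E : EdgeConf n L) : Matrix (Fin n) (Fin n) ℝ :=
  fun u v => prunedW a b w E u v - ((1 / 2) * ∑ ℓ, w ℓ * (a * μ ℓ + b * ν ℓ)) / n

/-- The spectral norm (ℓ²-operator norm) of a real square matrix. -/
noncomputable def specNorm {n : ℕ} (M : Matrix (Fin n) (Fin n) ℝ) : ℝ :=
  ‖Matrix.toEuclideanCLM (𝕜 := ℝ) M‖

/-- The number of `k`-cycles carrying the label sequence `ℓ`, in the canonical
orientation: starting from the minimal-index vertex of the cycle toward its
neighbor of smaller index. -/
def cycleCount [DecidableEq L] (n k : ℕ) (E : EdgeConf n L) (ℓ : Fin k → L) : ℕ :=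
  if hk : 0 < k then
    haveI : NeZero k := ⟨hk.ne'⟩
    (univ.filter fun c : Fin k → Fin n =>
      Function.Injective c ∧ (∀ i, c 0 ≤ c i) ∧
      c 1 < c ⟨k - 1, Nat.sub_lt hk one_pos⟩ ∧
      ∀ i : Fin k, getLabel E (c i) (c (i + 1)) = some (ℓ i)).card
  else 0

/-- The Poisson probability mass function. -/
noncomputable def poissonPMF (m : ℝ) (j : ℕ) : ℝ :=
  Real.exp (-m) * m ^ j / (Nat.factorial j)

/-- The mean cycle count `λ([ℓ]_k)` under the labeled Erdős–Rényi model. -/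
noncomputable def lamER [Fintype L] (a b : ℝ) (μ ν : L → ℝ) {k : ℕ} (ℓ : Fin k → L) : ℝ :=
  (1 / ((2 : ℝ) ^ (k + 1) * k)) * ∏ i, (a * μ (ℓ i) + b * ν (ℓ i))

/-- The mean cycle count `ξ([ℓ]_k)` under the labeled SBM. -/
noncomputable def xiSBM [Fintype L] (a b : ℝ) (μ ν : L → ℝ) {k : ℕ} (ℓ : Fin k → L) : ℝ :=
  (1 / ((2 : ℝ) ^ (k + 1) * k)) *
    (∏ i, (a * μ (ℓ i) + b * ν (ℓ i)) + ∏ i, (a * μ (ℓ i) - b * ν (ℓ i)))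

/-- The per-pair likelihood-ratio factor `W_{uv}(G, L, σ)` (SBM versus labeled
Erdős–Rényi), as a function of the pair status (`same` type or not) and the
edge/label information on the pair. -/
noncomputable def likPair (n : ℕ) (a b : ℝ) (μ ν : L → ℝ) (same : Bool) :
    Option L → ℝ
  | some ℓ =>
      if same then 2 * a * μ ℓ / (a * μ ℓ + b * ν ℓ)
      else 2 * b * ν ℓ / (a * μ ℓ + b * ν ℓ)
  | none =>
      if same then (1 - a / n) / (1 - (a + b) / (2 * n))
      else (1 - b / n) / (1 - (a + b) / (2 * n))

/-- The likelihood ratio `Y_n = ℙ_n / ℙ'_n` of the labeled SBM with respect to the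
labeled Erdős–Rényi model. -/
noncomputable def Ylik [Fintype L] (n : ℕ) (a b : ℝ) (μ ν : L → ℝ)
    (E : EdgeConf n L) : ℝ :=
  (1 / 2 : ℝ) ^ n * ∑ σ : Fin n → Bool,
    ∏ p : Pairs n, likPair n a b μ ν (σ p.1.1 == σ p.1.2) (E p)


/-!
Only the state of the pair `uv` enters, so the expectation is a sum over its `|𝓛| + 1` states.
With signs `ε = ±1` recording whether the endpoints have equal types, `p = aμ(ℓ)`, `r = bν(ℓ)`,
`d = (a - b)/(2n)` and `q = 1 - (a + b)/(2n)`, the factor `W_{uv}` is `1 + ε (p - r)/(p + r)` on an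
edge labelled `ℓ` and `1 - ε d/q` on a non-edge. Summing gives exactly `1 + εε' (τ/n + d²/q)`, which
differs from the claimed expansion by `(a + b)(a - b)²/(8n³q)`; this is `O(n⁻³)` as soon as
`q ≥ 1/2`, and the finitely many smaller `n` are absorbed into the constant.
-/

theorem sum_prod_mul_apply {ι α R : Type*} [Fintype ι] [DecidableEq ι] [Fintype α]
    [CommSemiring R] (m : α → R) (hm : ∑ x, m x = 1) (i : ι) (g : α → R) :
    ∑ E : ι → α, (∏ j, m (E j)) * g (E i) = ∑ x, m x * g x := by
  have hsplit : ∀ E : ι → α,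
      (∏ j, m (E j)) * g (E i) = ∏ j, m (E j) * if j = i then g (E j) else 1 := by
    intro E
    rw [prod_mul_distrib, prod_ite_eq' univ i, if_pos (mem_univ i)]
  rw [sum_congr rfl fun E _ => hsplit E,
    ← Fintype.prod_sum fun j x => m x * if j = i then g x else 1]
  rw [prod_eq_single i (fun j _ hj => by simp [hj, hm]) (by simp)]
  simp

theorem exists_forall_abs_le_div_pow {ι : Type*} [Fintype ι] (f : ι → ℕ → ℝ) (k N : ℕ) (K : ℝ)
    (h : ∀ i n, N ≤ n → |f i n| ≤ K / n ^ k) :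
    ∃ C, ∀ i n, 0 < n → |f i n| ≤ C / n ^ k := by
  refine ⟨max K (∑ j, ∑ m ∈ range N, (m : ℝ) ^ k * |f j m|), fun i n hn => ?_⟩
  have hnk : (0 : ℝ) < n ^ k := by positivity
  rcases le_or_gt N n with hN | hN
  · exact (h i n hN).trans (div_le_div_of_nonneg_right (le_max_left _ _) hnk.le)
  rw [le_div_iff₀ hnk, mul_comm]
  calc (n : ℝ) ^ k * |f i n| ≤ ∑ m ∈ range N, (m : ℝ) ^ k * |f i m| :=
        single_le_sum (f := fun m : ℕ => (m : ℝ) ^ k * |f i m|) (fun m _ => by positivity)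
          (mem_range.2 hN)
    _ ≤ ∑ j, ∑ m ∈ range N, (m : ℝ) ^ k * |f j m| :=
        single_le_sum (f := fun j => ∑ m ∈ range N, (m : ℝ) ^ k * |f j m|)
          (fun j _ => sum_nonneg fun (m : ℕ) _ => by positivity) (mem_univ i)
    _ ≤ _ := le_max_right _ _

theorem getLabel_of_lt {n : ℕ} (E : EdgeConf n L) {u v : Fin n} (huv : u < v) :
    getLabel E u v = E ⟨(u, v), huv⟩ := by
  simp [getLabel, huv]

def boolSign (s : Bool) : ℝ := if s then 1 else -1

theorem boolSign_mul_boolSign (s t : Bool) :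
    boolSign s * boolSign t = if s = t then 1 else -1 := by
  cases s <;> cases t <;> norm_num [boolSign]

theorem abs_boolSign (s : Bool) : |boolSign s| = 1 := by
  cases s <;> norm_num [boolSign]

/-- `E_{ℙ'_n}[W_{uv}(σ) W_{uv}(δ)]` for a pair `u < v`, where `s₁ = (σ_u == σ_v)` and
`s₂ = (δ_u == δ_v)`. -/
noncomputable def pairSecondMoment [Fintype L] (n : ℕ) (a b : ℝ) (μ ν : L → ℝ) (s₁ s₂ : Bool) : ℝ :=
  ∑ o : Option L, erPairMass n a b μ ν o * (likPair n a b μ ν s₁ o * likPair n a b μ ν s₂ o)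

section SecondMoment

variable (n : ℕ) {a b : ℝ} {μ ν : L → ℝ}

theorem likPair_none (s : Bool) :
    likPair n a b μ ν s none =
      (1 - (a + b) / (2 * n) - boolSign s * ((a - b) / (2 * n))) / (1 - (a + b) / (2 * n)) := by
  cases s <;> simp only [likPair, boolSign, Bool.false_eq_true, ↓reduceIte] <;> ring

theorem erPairMass_some_mul_likPair (hab : a + b ≠ 0) (ℓ : L) (hp : 0 ≤ a * μ ℓ)
    (hr : 0 ≤ b * ν ℓ) (s₁ s₂ : Bool) :
    erPairMass n a b μ ν (some ℓ) *
        (likPair n a b μ ν s₁ (some ℓ) * likPair n a b μ ν s₂ (some ℓ)) =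
      ((a * μ ℓ + b * ν ℓ) + (boolSign s₁ + boolSign s₂) * (a * μ ℓ - b * ν ℓ) +
        boolSign s₁ * boolSign s₂ * (2 * ((a * μ ℓ - b * ν ℓ) ^ 2 /
          (2 * (a * μ ℓ + b * ν ℓ))))) / (2 * n) := by
  rcases (add_nonneg hp hr).eq_or_lt with h0 | hpos
  · have hp0 : a * μ ℓ = 0 := by linarith
    have hr0 : b * ν ℓ = 0 := by linarith
    cases s₁ <;> cases s₂ <;> simp [erPairMass, likPair, hp0, hr0]
  · cases s₁ <;> cases s₂ <;>
    · simp only [erPairMass, likPair, boolSign, Bool.false_eq_true, ↓reduceIte]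
      field_simp
      ring

variable [Fintype L]

theorem sum_erPairMass (hab : a + b ≠ 0) (hμ : ∑ ℓ, μ ℓ = 1) (hν : ∑ ℓ, ν ℓ = 1) :
    ∑ o : Option L, erPairMass n a b μ ν o = 1 := by
  have hlabel : ∑ ℓ, (a * μ ℓ + b * ν ℓ) / (a + b) = 1 := by
    rw [← sum_div, sum_add_distrib, ← mul_sum, ← mul_sum, hμ, hν, mul_one, mul_one,
      div_self hab]
  simp only [Fintype.sum_option, erPairMass, ← mul_sum, hlabel]
  ring

theorem erExp_likPair_mul_likPair (hab : a + b ≠ 0) (hμ : ∑ ℓ, μ ℓ = 1) (hν : ∑ ℓ, ν ℓ = 1)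
    {u v : Fin n} (huv : u < v) (s₁ s₂ : Bool) :
    erExp n a b μ ν (fun E => likPair n a b μ ν s₁ (getLabel E u v) *
      likPair n a b μ ν s₂ (getLabel E u v)) = pairSecondMoment n a b μ ν s₁ s₂ := by
  simp only [erExp, erMass, getLabel_of_lt _ huv]
  exact sum_prod_mul_apply (erPairMass n a b μ ν) (sum_erPairMass n hab hμ hν)
    (⟨(u, v), huv⟩ : Pairs n) (fun o => likPair n a b μ ν s₁ o * likPair n a b μ ν s₂ o)

theorem sum_erPairMass_some_mul_likPair (hab : a + b ≠ 0) (ha : 0 ≤ a) (hb : 0 ≤ b)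
    (hμ : IsProbVec μ) (hν : IsProbVec ν) (s₁ s₂ : Bool) :
    ∑ ℓ, erPairMass n a b μ ν (some ℓ) *
        (likPair n a b μ ν s₁ (some ℓ) * likPair n a b μ ν s₂ (some ℓ)) =
      (a + b) / (2 * n) + (boolSign s₁ + boolSign s₂) * ((a - b) / (2 * n)) +
        boolSign s₁ * boolSign s₂ * (tau a b μ ν / n) := by
  rw [sum_congr rfl fun ℓ _ => erPairMass_some_mul_likPair n hab ℓ
    (mul_nonneg ha (hμ.1 ℓ)) (mul_nonneg hb (hν.1 ℓ)) s₁ s₂]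
  simp only [← sum_div, sum_add_distrib, sum_sub_distrib, ← mul_sum]
  rw [hμ.2, hν.2, tau]
  ring

theorem pairSecondMoment_eq (hab : a + b ≠ 0) (ha : 0 ≤ a) (hb : 0 ≤ b)
    (hμ : IsProbVec μ) (hν : IsProbVec ν) (hq : 1 - (a + b) / (2 * n) ≠ 0) (s₁ s₂ : Bool) :
    pairSecondMoment n a b μ ν s₁ s₂ = 1 + boolSign s₁ * boolSign s₂ *
      (tau a b μ ν / n + ((a - b) / (2 * n)) ^ 2 / (1 - (a + b) / (2 * n))) := by
  rw [pairSecondMoment, Fintype.sum_option,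
    sum_erPairMass_some_mul_likPair n hab ha hb hμ hν, likPair_none, likPair_none]
  simp only [erPairMass]
  generalize (a + b) / (2 * (n : ℝ)) = x at hq ⊢
  generalize (a - b) / (2 * (n : ℝ)) = d
  field_simp
  ring

theorem abs_pairSecondMoment_sub_le (ha : 0 < a) (hb : 0 < b) (hμ : IsProbVec μ)
    (hν : IsProbVec ν) (hn : a + b ≤ (n : ℝ)) (s₁ s₂ : Bool) :
    |pairSecondMoment n a b μ ν s₁ s₂ -
        (1 + boolSign s₁ * boolSign s₂ * (tau a b μ ν / n + (a - b) ^ 2 / (4 * (n : ℝ) ^ 2)))| ≤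
      (a + b) * (a - b) ^ 2 / 4 / n ^ 3 := by
  have hn0 : (0 : ℝ) < n := by linarith
  have hq : 1 / 2 ≤ 1 - (a + b) / (2 * n) := by
    rw [le_sub_comm, div_le_iff₀ (by positivity)]
    linarith
  rw [pairSecondMoment_eq n (by positivity) ha.le hb.le hμ hν (by linarith)]
  have hdiff : ∀ e t x d : ℝ, 1 - x ≠ 0 →
      (1 + e * (t + d ^ 2 / (1 - x))) - (1 + e * (t + d ^ 2)) = e * (d ^ 2 * x / (1 - x)) := by
    intro e t x d hx
    field_simp
    ring
  rw [show (a - b) ^ 2 / (4 * (n : ℝ) ^ 2) = ((a - b) / (2 * n)) ^ 2 by ring]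
  rw [hdiff _ _ _ _ (by linarith), abs_mul, abs_mul, abs_boolSign, abs_boolSign, one_mul, one_mul,
    abs_of_nonneg (by positivity)]
  calc ((a - b) / (2 * n)) ^ 2 * ((a + b) / (2 * n)) / (1 - (a + b) / (2 * n))
      ≤ ((a - b) / (2 * n)) ^ 2 * ((a + b) / (2 * n)) / (1 / 2) :=
        div_le_div_of_nonneg_left (by positivity) (by norm_num) hq
    _ = (a + b) * (a - b) ^ 2 / 4 / n ^ 3 := by
        field_simp
        ring

end SecondMoment

/-- **Lemma (Second-moment computation, Lemma 3).**
Under the labeled Erdős–Rényi distribution `ℙ'_n`, for a pair `u < v` and type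
assignments `σ, δ ∈ {±1}^n`: if `σ_u σ_v = δ_u δ_v` then
`E[W_{uv}(σ) W_{uv}(δ)] = 1 + τ/n + (a-b)²/(4n²) + O(n⁻³)`, and otherwise
`E[W_{uv}(σ) W_{uv}(δ)] = 1 - τ/n - (a-b)²/(4n²) + O(n⁻³)`. -/
theorem second_moment_pair
    {L : Type*} [Fintype L] (a b : ℝ) (ha : 0 < a) (hb : 0 < b)
    (μ ν : L → ℝ) (hμ : IsProbVec μ) (hν : IsProbVec ν) :
    ∃ C : ℝ, ∀ (n : ℕ), 0 < n → ∀ (u v : Fin n), u < v →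
      ∀ σ δ : Fin n → Bool,
        (((σ u = σ v) ↔ (δ u = δ v)) →
          |erExp n a b μ ν (fun E =>
              likPair n a b μ ν (σ u == σ v) (getLabel E u v) *
              likPair n a b μ ν (δ u == δ v) (getLabel E u v)) -
            (1 + tau a b μ ν / n + (a - b) ^ 2 / (4 * (n : ℝ) ^ 2))| ≤ C / (n : ℝ) ^ 3) ∧
        (¬((σ u = σ v) ↔ (δ u = δ v)) →
          |erExp n a b μ ν (fun E =>
              likPair n a b μ ν (σ u == σ v) (getLabel E u v) *
              likPair n a b μ ν (δ u == δ v) (getLabel E u v)) -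
            (1 - tau a b μ ν / n - (a - b) ^ 2 / (4 * (n : ℝ) ^ 2))| ≤ C / (n : ℝ) ^ 3) := by
  obtain ⟨C, hC⟩ := exists_forall_abs_le_div_pow
    (fun (s : Bool × Bool) n => pairSecondMoment n a b μ ν s.1 s.2 -
      (1 + boolSign s.1 * boolSign s.2 * (tau a b μ ν / n + (a - b) ^ 2 / (4 * (n : ℝ) ^ 2))))
    3 ⌈a + b⌉₊ ((a + b) * (a - b) ^ 2 / 4)
    fun s n hn => abs_pairSecondMoment_sub_le n ha hb hμ hν (Nat.ceil_le.1 hn) s.1 s.2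
  refine ⟨C, fun n hn u v huv σ δ => ?_⟩
  have h := hC (σ u == σ v, δ u == δ v) n hn
  rw [boolSign_mul_boolSign] at h
  rw [erExp_likPair_mul_likPair n (by positivity) hμ.2 hν.2 huv]
  constructor <;> intro hσδ
  · rw [if_pos (by simpa using hσδ), one_mul, ← add_assoc] at h
    exact h
  · rw [if_neg (by simpa using hσδ)] at h
    convert h using 3
    ring

end LSBM
end

section
/- Let x, y ∈ ℝ^n with ‖x‖ = ‖y‖ = 1 and xᵀy ≥ 0, let α, β ∈ ℝ, and set M = α·x·xᵀ and M' = β·y·yᵀ. Then ‖x − y‖ ≤ (√2 / max{|α|, |β|})·‖M − M'‖, where the matrix norm is the spectral norm. -/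
open Finset Filter Real

/-! Let `s = ⟪x, y⟫` and `w = x - s y`, so `‖w‖² = 1 - s²` (the squared sine of the angle).
Since `w ⟂ y`, the operator `α xxᵀ - β yyᵀ` maps `w` to `α ‖w‖² x`, so its norm is at least
`|α| ‖w‖`; exchanging the roles of `x` and `y` gives `|β| ‖w‖` as well. Finally, for `0 ≤ s ≤ 1`,
`‖x - y‖² = 2 - 2s ≤ 2 (1 - s²) = 2 ‖w‖²`. -/

open InnerProductSpace RealInnerProductSpace

section InnerProductSpace

variable {E : Type*} [NormedAddCommGroup E] [InnerProductSpace ℝ E]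

theorem norm_sub_inner_smul_sq {x y : E} (hx : ‖x‖ = 1) (hy : ‖y‖ = 1) :
    ‖x - ⟪y, x⟫ • y‖ ^ 2 = 1 - ⟪x, y⟫ ^ 2 := by
  rw [norm_sub_sq_real, norm_smul, inner_smul_right, real_inner_comm y x, Real.norm_eq_abs,
    mul_pow, sq_abs, hx, hy]
  ring

theorem norm_sub_inner_smul_comm {x y : E} (hx : ‖x‖ = 1) (hy : ‖y‖ = 1) :
    ‖y - ⟪x, y⟫ • x‖ = ‖x - ⟪y, x⟫ • y‖ := by
  rw [← sq_eq_sq₀ (norm_nonneg _) (norm_nonneg _), norm_sub_inner_smul_sq hy hx,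
    norm_sub_inner_smul_sq hx hy, real_inner_comm]

theorem norm_sub_le_sqrt_two_mul_norm_sub_inner_smul {x y : E} (hx : ‖x‖ = 1) (hy : ‖y‖ = 1)
    (hxy : 0 ≤ ⟪x, y⟫) : ‖x - y‖ ≤ √2 * ‖x - ⟪y, x⟫ • y‖ := by
  have hle : ⟪x, y⟫ ≤ 1 := by simpa [hx, hy] using real_inner_le_norm x y
  refine (pow_le_pow_iff_left₀ (norm_nonneg _) (by positivity) two_ne_zero).1 ?_
  rw [mul_pow, Real.sq_sqrt zero_le_two, norm_sub_inner_smul_sq hx hy, norm_sub_sq_real, hx, hy]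
  nlinarith

theorem abs_mul_norm_sub_inner_smul_le_opNorm {x y : E} (hx : ‖x‖ = 1) (hy : ‖y‖ = 1)
    (α β : ℝ) :
    |α| * ‖x - ⟪y, x⟫ • y‖ ≤ ‖α • rankOne ℝ x x - β • rankOne ℝ y y‖ := by
  set w := x - ⟪y, x⟫ • y with hw_def
  have hyw : ⟪y, w⟫ = 0 := by
    rw [hw_def, inner_sub_right, inner_smul_right, real_inner_self_eq_norm_sq, hy]
    ring
  have hxw : ⟪x, w⟫ = ‖w‖ ^ 2 := by
    rw [norm_sub_inner_smul_sq hx hy, hw_def, inner_sub_right, inner_smul_right,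
      real_inner_self_eq_norm_sq, hx, real_inner_comm y x]
    ring
  have happly : (α • rankOne ℝ x x - β • rankOne ℝ y y) w = (α * ‖w‖ ^ 2) • x := by
    simp [hyw, hxw, smul_smul]
  rcases (norm_nonneg w).eq_or_lt with hw | hw
  · simp [← hw]
  refine le_of_mul_le_mul_right ?_ hw
  calc |α| * ‖w‖ * ‖w‖ = ‖(α • rankOne ℝ x x - β • rankOne ℝ y y) w‖ := by
        rw [happly, norm_smul, hx, Real.norm_eq_abs, abs_mul, abs_of_nonneg (sq_nonneg ‖w‖)]
        ring
    _ ≤ _ := ContinuousLinearMap.le_opNorm _ _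

theorem max_abs_mul_norm_sub_inner_smul_le_opNorm {x y : E} (hx : ‖x‖ = 1) (hy : ‖y‖ = 1)
    (α β : ℝ) :
    max |α| |β| * ‖x - ⟪y, x⟫ • y‖ ≤ ‖α • rankOne ℝ x x - β • rankOne ℝ y y‖ := by
  rcases max_cases |α| |β| with ⟨hmax, _⟩ | ⟨hmax, _⟩ <;> rw [hmax]
  · exact abs_mul_norm_sub_inner_smul_le_opNorm hx hy α β
  · rw [← norm_sub_inner_smul_comm hx hy, ← norm_neg (α • _ - _), neg_sub]
    exact abs_mul_norm_sub_inner_smul_le_opNorm hy hx β α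

theorem norm_sub_le_sqrt_two_div_max_mul_opNorm {x y : E} (hx : ‖x‖ = 1) (hy : ‖y‖ = 1)
    (hxy : 0 ≤ ⟪x, y⟫) {α β : ℝ} (hαβ : 0 < max |α| |β|) :
    ‖x - y‖ ≤ √2 / max |α| |β| * ‖α • rankOne ℝ x x - β • rankOne ℝ y y‖ := by
  calc ‖x - y‖ ≤ √2 * ‖x - ⟪y, x⟫ • y‖ :=
        norm_sub_le_sqrt_two_mul_norm_sub_inner_smul hx hy hxy
    _ ≤ √2 * (‖α • rankOne ℝ x x - β • rankOne ℝ y y‖ / max |α| |β|) := by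
        gcongr
        rw [le_div_iff₀' hαβ]
        exact max_abs_mul_norm_sub_inner_smul_le_opNorm hx hy α β
    _ = _ := by ring

end InnerProductSpace

theorem Matrix.toEuclideanCLM_vecMulVec_self {ι : Type*} [Fintype ι] [DecidableEq ι]
    (x : ι → ℝ) :
    Matrix.toEuclideanCLM (𝕜 := ℝ) (Matrix.vecMulVec x x) =
      rankOne ℝ (WithLp.toLp 2 x) (WithLp.toLp 2 x) := by
  ext v i
  simp only [Matrix.ofLp_toEuclideanCLM, Matrix.mulVec, dotProduct, Matrix.vecMulVec_apply,
    rankOne_apply, PiLp.inner_apply, RCLike.inner_apply, ringHom_apply, PiLp.smul_apply,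
    smul_eq_mul, sum_mul]
  exact Finset.sum_congr rfl fun j _ => by ring

namespace LSBM

/-- **Lemma (Davis–Kahan sin θ, rank-one case, Lemma 6, first part).**
If `‖x‖ = ‖y‖ = 1`, `xᵀy ≥ 0`, `M = α xxᵀ` and `M' = β yyᵀ`, then
`‖x − y‖ ≤ (√2 / max(|α|, |β|)) ‖M − M'‖` in spectral norm. -/
theorem davis_kahan_rank_one
    {n : ℕ} (x y : Fin n → ℝ)
    (hx : ∑ i, x i ^ 2 = 1) (hy : ∑ i, y i ^ 2 = 1)
    (hxy : 0 ≤ ∑ i, x i * y i)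
    (α β : ℝ) (hαβ : 0 < max |α| |β|) :
    Real.sqrt (∑ i, (x i - y i) ^ 2) ≤
      Real.sqrt 2 / max |α| |β| *
        specNorm (α • Matrix.vecMulVec x x - β • Matrix.vecMulVec y y) := by
  have hnorm (v : Fin n → ℝ) : ‖WithLp.toLp 2 v‖ = √(∑ i, v i ^ 2) := by
    simp [EuclideanSpace.norm_eq]
  have hinner : ⟪WithLp.toLp 2 x, WithLp.toLp 2 y⟫ = ∑ i, x i * y i := by
    simp [PiLp.inner_apply, mul_comm]
  have h := norm_sub_le_sqrt_two_div_max_mul_opNorm (x := WithLp.toLp 2 x)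
    (y := WithLp.toLp 2 y) (by rw [hnorm, hx, Real.sqrt_one]) (by rw [hnorm, hy, Real.sqrt_one])
    (hinner ▸ hxy) hαβ
  rwa [← WithLp.toLp_sub, hnorm, ← Matrix.toEuclideanCLM_vecMulVec_self,
    ← Matrix.toEuclideanCLM_vecMulVec_self, ← map_smul, ← map_smul, ← map_sub] at h

end LSBM
end

section
/- Let x, y ∈ ℝ^n with ‖x‖ = ‖y‖ = 1 and xᵀy ≥ 0, let α, β ∈ ℝ with max{|α|, |β|} > 0, and set M = α·x·xᵀ and M' = β·y·yᵀ. Let M̃ be an n×n real matrix such that M' is a best rank-1 approximation of M̃ in spectral norm, i.e., ‖M̃ − M'‖ ≤ ‖M̃ − N‖ for every n×n matrix N of rank at most 1. Then ‖x − y‖ ≤ (2√2 / max{|α|, |β|})·‖M − M̃‖. -/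
open Finset Filter Real

/-!
Write `t = ⟪x, y⟫`. The vector `z = x - t • y` is orthogonal to `y`, has `‖z‖² = 1 - t²`, and
`α xxᵀ - β yyᵀ` maps it to `α (1 - t²) x`; hence the spectral norm of `α xxᵀ - β yyᵀ` is at least
`|α| √(1 - t²)`, and symmetrically at least `|β| √(1 - t²)`. Since `α xxᵀ` has rank one, optimality
of `M'` gives `‖M̃ - M'‖ ≤ ‖M̃ - M‖`, so `‖M - M'‖ ≤ 2 ‖M - M̃‖`. Finally
`‖x - y‖² = 2 (1 - t) ≤ 2 (1 - t²)` because `0 ≤ t ≤ 1`.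
-/

open InnerProductSpace
open scoped RealInnerProductSpace

theorem norm_sub_le_two_mul_norm_sub_of_norm_sub_le {G : Type*} [SeminormedAddCommGroup G]
    {a b m : G} (h : ‖m - b‖ ≤ ‖m - a‖) : ‖a - b‖ ≤ 2 * ‖a - m‖ := by
  have := norm_sub_le_norm_sub_add_norm_sub a m b
  rw [norm_sub_rev m a] at h
  linarith

section RankOne

variable {E : Type*} [NormedAddCommGroup E] [InnerProductSpace ℝ E] {x y : E}

theorem abs_mul_sqrt_one_sub_inner_sq_le_norm_smul_rankOne_sub (hx : ‖x‖ = 1) (hy : ‖y‖ = 1)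
    (α β : ℝ) : |α| * √(1 - ⟪x, y⟫ ^ 2) ≤ ‖α • rankOne ℝ x x - β • rankOne ℝ y y‖ := by
  set t := ⟪x, y⟫
  set z := x - t • y
  have hz : ‖z‖ ^ 2 = 1 - t ^ 2 := by
    rw [norm_sub_sq_real, real_inner_smul_right, norm_smul, hx, hy, Real.norm_eq_abs, mul_one,
      sq_abs]
    ring
  have hTz : (α • rankOne ℝ x x - β • rankOne ℝ y y) z = (α * ‖z‖ ^ 2) • x := by
    have hxz : ⟪x, z⟫ = ‖z‖ ^ 2 := by
      rw [hz]
      simp only [z, inner_sub_right, real_inner_smul_right, real_inner_self_eq_norm_sq, hx]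
      ring
    have hyz : ⟪y, z⟫ = 0 := by
      simp only [z, inner_sub_right, real_inner_smul_right, real_inner_self_eq_norm_sq, hy,
        real_inner_comm x y]
      ring
    simp [hxz, hyz, smul_smul]
  have key : |α| * ‖z‖ * ‖z‖ ≤ ‖α • rankOne ℝ x x - β • rankOne ℝ y y‖ * ‖z‖ := by
    calc |α| * ‖z‖ * ‖z‖ = ‖(α • rankOne ℝ x x - β • rankOne ℝ y y) z‖ := by
          rw [hTz, norm_smul, hx, mul_one, norm_mul, Real.norm_eq_abs, norm_pow, norm_norm]
          ring
      _ ≤ _ := ContinuousLinearMap.le_opNorm _ _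
  rw [← hz, Real.sqrt_sq (norm_nonneg z)]
  rcases (norm_nonneg z).eq_or_lt with hz0 | hzpos
  · rw [← hz0, mul_zero]
    exact norm_nonneg _
  · exact le_of_mul_le_mul_right key hzpos

theorem max_abs_mul_sqrt_one_sub_inner_sq_le_norm_smul_rankOne_sub (hx : ‖x‖ = 1)
    (hy : ‖y‖ = 1) (α β : ℝ) :
    max |α| |β| * √(1 - ⟪x, y⟫ ^ 2) ≤ ‖α • rankOne ℝ x x - β • rankOne ℝ y y‖ := by
  rw [max_mul_of_nonneg _ _ (Real.sqrt_nonneg _), max_le_iff]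
  refine ⟨abs_mul_sqrt_one_sub_inner_sq_le_norm_smul_rankOne_sub hx hy α β, ?_⟩
  rw [norm_sub_rev, real_inner_comm]
  exact abs_mul_sqrt_one_sub_inner_sq_le_norm_smul_rankOne_sub hy hx β α

theorem norm_sub_le_sqrt_two_mul_sqrt_one_sub_inner_sq (hx : ‖x‖ = 1) (hy : ‖y‖ = 1)
    (hxy : 0 ≤ ⟪x, y⟫) : ‖x - y‖ ≤ √2 * √(1 - ⟪x, y⟫ ^ 2) := by
  have hle : ⟪x, y⟫ ≤ 1 := by simpa [hx, hy] using real_inner_le_norm x y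
  rw [← Real.sqrt_mul zero_le_two, ← Real.sqrt_sq (norm_nonneg _)]
  gcongr
  rw [norm_sub_sq_real, hx, hy]
  nlinarith

end RankOne

namespace Matrix

variable {n : Type*} [Fintype n]

theorem toEuclideanCLM_vecMulVec [DecidableEq n] (x y : n → ℝ) :
    toEuclideanCLM (𝕜 := ℝ) (vecMulVec x y) = rankOne ℝ (WithLp.toLp 2 x) (WithLp.toLp 2 y) := by
  ext z i
  simp [mulVec, vecMulVec, dotProduct, PiLp.inner_apply, Finset.mul_sum, mul_assoc, mul_comm]

theorem rank_smul_vecMulVec_le {R : Type*} [CommRing R] [StrongRankCondition R] (c : R)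
    (x y : n → R) : (c • vecMulVec x y).rank ≤ 1 := by
  rw [← smul_vecMulVec]
  exact rank_vecMulVec_le _ _

end Matrix

namespace LSBM

/-- **Lemma (Davis–Kahan sin θ, rank-one case, Lemma 6, second part).**
If `‖x‖ = ‖y‖ = 1`, `xᵀy ≥ 0`, `M = α xxᵀ`, `M' = β yyᵀ`, and `M'` is a best rank-one
approximation of `M̃` in spectral norm, then
`‖x − y‖ ≤ (2√2 / max(|α|, |β|)) ‖M − M̃‖`. -/
theorem davis_kahan_rank_one_approx
    {n : ℕ} (x y : Fin n → ℝ)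
    (hx : ∑ i, x i ^ 2 = 1) (hy : ∑ i, y i ^ 2 = 1)
    (hxy : 0 ≤ ∑ i, x i * y i)
    (α β : ℝ) (hαβ : 0 < max |α| |β|)
    (Mt : Matrix (Fin n) (Fin n) ℝ)
    (hbest : ∀ N : Matrix (Fin n) (Fin n) ℝ, N.rank ≤ 1 →
      specNorm (Mt - β • Matrix.vecMulVec y y) ≤ specNorm (Mt - N)) :
    Real.sqrt (∑ i, (x i - y i) ^ 2) ≤
      2 * Real.sqrt 2 / max |α| |β| *
        specNorm (α • Matrix.vecMulVec x x - Mt) := by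
  set X := WithLp.toLp 2 x
  set Y := WithLp.toLp 2 y
  have hX : ‖X‖ = 1 := by simp [X, EuclideanSpace.norm_eq, hx]
  have hY : ‖Y‖ = 1 := by simp [Y, EuclideanSpace.norm_eq, hy]
  have hXY : ⟪X, Y⟫ = ∑ i, x i * y i := by simp [X, Y, PiLp.inner_apply, mul_comm]
  have hlower : max |α| |β| * √(1 - ⟪X, Y⟫ ^ 2) ≤
      specNorm (α • Matrix.vecMulVec x x - β • Matrix.vecMulVec y y) := by
    simpa [specNorm, Matrix.toEuclideanCLM_vecMulVec] using
      max_abs_mul_sqrt_one_sub_inner_sq_le_norm_smul_rankOne_sub hX hY α β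
  have hupper : specNorm (α • Matrix.vecMulVec x x - β • Matrix.vecMulVec y y) ≤
      2 * specNorm (α • Matrix.vecMulVec x x - Mt) := by
    have h := hbest _ (Matrix.rank_smul_vecMulVec_le α x x)
    simp only [specNorm, map_sub] at h ⊢
    exact norm_sub_le_two_mul_norm_sub_of_norm_sub_le h
  rw [show √(∑ i, (x i - y i) ^ 2) = ‖X - Y‖ by simp [X, Y, EuclideanSpace.norm_eq]]
  calc ‖X - Y‖ ≤ √2 * √(1 - ⟪X, Y⟫ ^ 2) :=
        norm_sub_le_sqrt_two_mul_sqrt_one_sub_inner_sq hX hY (hXY ▸ hxy)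
    _ ≤ √2 * (2 * specNorm (α • Matrix.vecMulVec x x - Mt) / max |α| |β|) := by
        gcongr
        rw [le_div_iff₀ hαβ]
        linarith
    _ = _ := by ring

end LSBM
end

section
/- Let ε₁, …, ε_n be independent random variables, each uniformly distributed on {−1, +1}, and set Z_n = (ε₁ + ⋯ + ε_n)/√n. Then for every real τ with 0 < τ < 1, E[exp(τ·Z_n²/2)] → (1 − τ)^{−1/2} as n → ∞. -/
open Finset Filter Real

namespace LSBM

variable {L : Type*}

/-!
Linearise the square with the moment generating function of a standard Gaussian `G`:
`exp (s ^ 2 / 2) = E exp (s G)`. Averaging over the signs first turns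
`E exp (τ Z_n ^ 2 / 2)` into `E cosh (√(τ / n) G) ^ n`. The sandwich
`1 + y ^ 2 / 2 ≤ cosh y ≤ exp (y ^ 2 / 2)` shows that the integrand converges to
`exp (τ G ^ 2 / 2)` and is dominated by it, which is integrable exactly because `τ < 1`;
dominated convergence and `E exp (τ G ^ 2 / 2) = (1 - τ) ^ (-1/2)` finish the proof.
-/

open MeasureTheory ProbabilityTheory Topology

lemma one_add_sq_half_le_cosh (x : ℝ) : 1 + x ^ 2 / 2 ≤ cosh x := by
  have h := sum_le_hasSum (range 2) (fun i _ => ?_) (hasSum_cosh x)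
  · simpa [sum_range_succ, Nat.factorial] using h
  · rw [pow_mul]
    positivity

lemma cosh_div_sqrt_pow_le_exp (x : ℝ) (n : ℕ) : cosh (x / √n) ^ n ≤ exp (x ^ 2 / 2) := by
  rcases n.eq_zero_or_pos with rfl | hn
  · simp [one_le_exp (by positivity : (0:ℝ) ≤ x ^ 2 / 2)]
  calc cosh (x / √n) ^ n ≤ exp ((x / √n) ^ 2 / 2) ^ n :=
        pow_le_pow_left₀ (cosh_pos _).le (cosh_le_exp_half_sq _) n
    _ = exp (x ^ 2 / 2) := by
        rw [← exp_nat_mul, div_pow, sq_sqrt n.cast_nonneg]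
        field_simp

lemma tendsto_cosh_div_sqrt_pow (x : ℝ) :
    Tendsto (fun n : ℕ => cosh (x / √n) ^ n) atTop (𝓝 (exp (x ^ 2 / 2))) := by
  refine tendsto_of_tendsto_of_tendsto_of_le_of_le' (tendsto_one_add_div_pow_exp (x ^ 2 / 2))
    tendsto_const_nhds ?_ (Eventually.of_forall (cosh_div_sqrt_pow_le_exp x))
  filter_upwards [eventually_ne_atTop 0] with n hn
  have hsq : x ^ 2 / 2 / n = (x / √n) ^ 2 / 2 := by
    rw [div_pow, sq_sqrt n.cast_nonneg]
    ring
  rw [hsq]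
  exact pow_le_pow_left₀ (by positivity) (one_add_sq_half_le_cosh _) n

lemma sum_exp_mul_sum_sign {ι : Type*} [Fintype ι] [DecidableEq ι] (x : ℝ) :
    ∑ ε : ι → Bool, exp (x * ∑ u, (if ε u then (1 : ℝ) else -1))
      = (2 * cosh x) ^ Fintype.card ι := by
  calc ∑ ε : ι → Bool, exp (x * ∑ u, (if ε u then (1 : ℝ) else -1))
      = ∑ ε : ι → Bool, ∏ u, exp (x * if ε u then 1 else -1) := by
        simp only [mul_sum, exp_sum]
    _ = ∏ _u : ι, ∑ b : Bool, exp (x * if b then 1 else -1) := by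
        rw [Fintype.prod_sum]
    _ = (2 * cosh x) ^ Fintype.card ι := by
        simp [cosh_eq, mul_div_cancel₀]

lemma exp_sq_half_eq_integral_gaussianReal (s : ℝ) :
    exp (s ^ 2 / 2) = ∫ t, exp (s * t) ∂gaussianReal 0 1 := by
  have h := congrFun (mgf_id_gaussianReal (μ := 0) (v := 1)) s
  simp only [mgf, id] at h
  simpa using h.symm

lemma rademacher_exp_sq_half_eq_integral_cosh_pow {ι : Type*} [Fintype ι] [DecidableEq ι] (c : ℝ) :
    (1 / 2 : ℝ) ^ Fintype.card ι * ∑ ε : ι → Bool,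
      exp ((c * ∑ u, (if ε u then (1 : ℝ) else -1)) ^ 2 / 2)
      = ∫ t, cosh (c * t) ^ Fintype.card ι ∂gaussianReal 0 1 := by
  simp_rw [exp_sq_half_eq_integral_gaussianReal]
  rw [← integral_finsetSum _ fun ε _ => integrable_exp_mul_gaussianReal _,
    ← integral_const_mul]
  congr 1 with t
  simp_rw [mul_right_comm _ _ t]
  rw [sum_exp_mul_sum_sign, ← mul_pow, one_div, inv_mul_cancel_left₀ two_ne_zero]

lemma gaussianPDFReal_mul_exp_mul_sq_half (τ t : ℝ) :
    gaussianPDFReal 0 1 t * exp (τ * t ^ 2 / 2) = (√(2 * π))⁻¹ * exp (-((1 - τ) / 2) * t ^ 2) := by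
  rw [gaussianPDFReal, mul_assoc, ← exp_add]
  congr 2
  · simp
  · simp only [sub_zero, NNReal.coe_one, mul_one]
    ring

lemma integrable_exp_mul_sq_half_gaussianReal {τ : ℝ} (hτ : τ < 1) :
    Integrable (fun t => exp (τ * t ^ 2 / 2)) (gaussianReal 0 1) := by
  rw [gaussianReal_of_var_ne_zero _ one_ne_zero,
    integrable_withDensity_iff_integrable_smul' (measurable_gaussianPDF 0 1)
      (ae_of_all _ fun _ => gaussianPDF_lt_top)]
  simp_rw [toReal_gaussianPDF, smul_eq_mul, gaussianPDFReal_mul_exp_mul_sq_half]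
  exact (integrable_exp_neg_mul_sq (by linarith)).const_mul _

lemma integral_exp_mul_sq_half_gaussianReal {τ : ℝ} (hτ : τ < 1) :
    ∫ t, exp (τ * t ^ 2 / 2) ∂gaussianReal 0 1 = (1 - τ) ^ (-(1 / 2 : ℝ)) := by
  have hτ' : 0 < 1 - τ := by linarith
  rw [integral_gaussianReal_eq_integral_smul one_ne_zero]
  simp_rw [smul_eq_mul, gaussianPDFReal_mul_exp_mul_sq_half, integral_const_mul,
    integral_gaussian, rpow_neg hτ'.le, ← sqrt_eq_rpow]
  rw [show π / ((1 - τ) / 2) = 2 * π / (1 - τ) by field_simp, sqrt_div' _ hτ'.le]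
  field_simp

lemma tendsto_integral_cosh_pow_gaussianReal {τ : ℝ} (h0 : 0 ≤ τ) (h1 : τ < 1) :
    Tendsto (fun n : ℕ => ∫ t, cosh (√τ / √n * t) ^ n ∂gaussianReal 0 1) atTop
      (𝓝 (∫ t, exp (τ * t ^ 2 / 2) ∂gaussianReal 0 1)) := by
  have hrw : ∀ (n : ℕ) (t : ℝ), √τ / √n * t = √τ * t / √n := fun n t => div_mul_eq_mul_div _ _ _
  have hsq : ∀ t : ℝ, (√τ * t) ^ 2 / 2 = τ * t ^ 2 / 2 := fun t => by
    rw [mul_pow, sq_sqrt h0]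
  refine tendsto_integral_of_dominated_convergence _
    (fun n => (by fun_prop : Continuous fun t => cosh (√τ / √n * t) ^ n).aestronglyMeasurable)
    (integrable_exp_mul_sq_half_gaussianReal h1) (fun n => ae_of_all _ fun t => ?_)
    (ae_of_all _ fun t => ?_)
  · rw [norm_of_nonneg (by positivity), hrw, ← hsq]
    exact cosh_div_sqrt_pow_le_exp _ n
  · simpa only [hrw, hsq] using tendsto_cosh_div_sqrt_pow (√τ * t)

/-- **Lemma (Gaussian limit of the exponential moment).**
If `ε₁, …, ε_n` are i.i.d. Rademacher and `Z_n = (ε₁ + ⋯ + ε_n)/√n`, then for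
`0 < τ < 1`, `E[exp(τ Z_n²/2)] → (1 − τ)^{−1/2}` as `n → ∞`. -/
theorem rademacher_exp_moment_limit (τ : ℝ) (h0 : 0 < τ) (h1 : τ < 1) :
    Filter.Tendsto (fun n : ℕ =>
      (1 / 2 : ℝ) ^ n * ∑ ε : Fin n → Bool,
        Real.exp (τ *
          ((∑ u, (if ε u then (1 : ℝ) else -1)) / Real.sqrt n) ^ 2 / 2))
      Filter.atTop (nhds ((1 - τ) ^ (-(1 / 2 : ℝ)))) := by
  have hrepr : ∀ n : ℕ, (1 / 2 : ℝ) ^ n * ∑ ε : Fin n → Bool,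
      exp (τ * ((∑ u, (if ε u then (1 : ℝ) else -1)) / √n) ^ 2 / 2)
        = ∫ t, cosh (√τ / √n * t) ^ n ∂gaussianReal 0 1 := by
    intro n
    have := rademacher_exp_sq_half_eq_integral_cosh_pow (ι := Fin n) (√τ / √n)
    rw [Fintype.card_fin] at this
    rw [← this]
    congr 2 with ε
    congr 1
    rw [mul_pow, div_pow, div_pow, sq_sqrt h0.le]
    ring
  rw [← integral_exp_mul_sq_half_gaussianReal h1]
  simpa only [hrepr] using tendsto_integral_cosh_pow_gaussianReal h0.le h1

end LSBM
end
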